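/- Fix ε ≥ 0 and define g : (0,∞) → ℝ by g(x) = Φ(x/2 − ε/x) − e^ε Φ(−x/2 − ε/x), where Φ is the standard normal CDF. Then g is strictly monotonically increasing on (0,∞). -/

import Mathlib

open MeasureTheory ProbabilityTheory Filter

noncomputable def frob {m n : ℕ} (M : Matrix (Fin m) (Fin n) ℝ) : ℝ :=
  Real.sqrt (∑ i, ∑ j, (M i j)^2)

noncomputable def sv {m n : ℕ} (M : Matrix (Fin m) (Fin n) ℝ) : Fin n → ℝ :=
  fun i => Real.sqrt ((show (M.transpose * M).IsHermitian by
    simpa using Matrix.isHermitian_conjTranspose_mul_self M).eigenvalues i)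

/-- `σ` is the non-increasingly ordered tuple of singular values of `M`. -/
def IsSVals {m n : ℕ} (M : Matrix (Fin m) (Fin n) ℝ) (σ : Fin n → ℝ) : Prop :=
  Antitone σ ∧ ∃ e : Equiv.Perm (Fin n), σ = sv M ∘ e

/-- Standard normal CDF. -/
noncomputable def Phi (t : ℝ) : ℝ :=
  (Real.sqrt (2 * Real.pi))⁻¹ * ∫ u in Set.Iic t, Real.exp (-u^2/2)

/-! The chain rule gives `g' x = φ(x/2 - ε/x) (1/2 + ε/x²) - e^ε φ(-x/2 - ε/x) (-1/2 + ε/x²)`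
with `φ = Φ'`. Since `(x/2 + ε/x)² - (x/2 - ε/x)² = 2ε`, the Gaussian density satisfies
`e^ε φ(-x/2 - ε/x) = φ(x/2 - ε/x)`, so the terms in `ε/x²` cancel and `g' x = φ(x/2 - ε/x) > 0`. -/

theorem hasDerivAt_integral_Iic {E : Type*} [NormedAddCommGroup E] [NormedSpace ℝ E]
    [CompleteSpace E] {f : ℝ → E} (hf : Integrable f) {t : ℝ}
    (hft : ContinuousAt f t) : HasDerivAt (fun s => ∫ u in Set.Iic s, f u) (f t) t := by
  have hsplit : (fun s => ∫ u in Set.Iic s, f u) =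
      fun s => (∫ u in Set.Iic 0, f u) + ∫ u in (0:ℝ)..s, f u := by
    ext s
    rw [← intervalIntegral.integral_Iic_sub_Iic hf.integrableOn hf.integrableOn]
    abel
  rw [hsplit]
  exact (intervalIntegral.integral_hasDerivAt_right hf.intervalIntegrable
    hf.aestronglyMeasurable.stronglyMeasurableAtFilter hft).const_add _

theorem integrable_exp_neg_sq_div_two : Integrable fun u : ℝ => Real.exp (-u^2/2) := by
  convert integrable_exp_neg_mul_sq (by norm_num : (0:ℝ) < 1/2) using 3 with u
  ring

theorem hasDerivAt_Phi (t : ℝ) :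
    HasDerivAt Phi ((Real.sqrt (2 * Real.pi))⁻¹ * Real.exp (-t^2/2)) t :=
  (hasDerivAt_integral_Iic integrable_exp_neg_sq_div_two (by fun_prop)).const_mul _

theorem exp_mul_exp_neg_sq_half (ε : ℝ) {x : ℝ} (hx : x ≠ 0) :
    Real.exp ε * Real.exp (-(-x/2 - ε/x)^2/2) = Real.exp (-(x/2 - ε/x)^2/2) := by
  rw [← Real.exp_add]
  congr 1
  field_simp
  ring

theorem hasDerivAt_Phi_sub_exp_mul_Phi (ε : ℝ) {x : ℝ} (hx : x ≠ 0) :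
    HasDerivAt (fun x : ℝ => Phi (x/2 - ε/x) - Real.exp ε * Phi (-x/2 - ε/x))
      ((Real.sqrt (2 * Real.pi))⁻¹ * Real.exp (-(x/2 - ε/x)^2/2)) x := by
  have hplus : HasDerivAt (fun x : ℝ => x/2 - ε/x) (1/2 + ε/x^2) x := by
    refine (((hasDerivAt_id x).div_const 2).sub
      ((hasDerivAt_const x ε).div (hasDerivAt_id x) hx)).congr_deriv ?_
    simp only [id]
    field_simp
    ring
  have hminus : HasDerivAt (fun x : ℝ => -x/2 - ε/x) (-(1/2) + ε/x^2) x := by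
    refine (((hasDerivAt_id x).neg.div_const 2).sub
      ((hasDerivAt_const x ε).div (hasDerivAt_id x) hx)).congr_deriv ?_
    simp only [id]
    field_simp
    ring
  refine (((hasDerivAt_Phi _).comp x hplus).sub
    (((hasDerivAt_Phi _).comp x hminus).const_mul (Real.exp ε))).congr_deriv ?_
  linear_combination (1/2 - ε/x^2) * (Real.sqrt (2 * Real.pi))⁻¹ * exp_mul_exp_neg_sq_half ε hx

theorem stmt7_general (ε : ℝ) :
    StrictMonoOn (fun x : ℝ => Phi (x/2 - ε/x) - Real.exp ε * Phi (-x/2 - ε/x))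
      (Set.Ioi 0) := by
  have hderiv (x : ℝ) (hx : 0 < x) := hasDerivAt_Phi_sub_exp_mul_Phi ε hx.ne'
  refine strictMonoOn_of_deriv_pos (convex_Ioi 0)
    (fun x hx => (hderiv x hx).continuousAt.continuousWithinAt) fun x hx => ?_
  rw [interior_Ioi] at hx
  rw [(hderiv x hx).deriv]
  positivity

theorem stmt7 (ε : ℝ) (hε : 0 ≤ ε) :
    StrictMonoOn (fun x : ℝ => Phi (x/2 - ε/x) - Real.exp ε * Phi (-x/2 - ε/x))
      (Set.Ioi 0) :=
  stmt7_general ε
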